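/- arXiv:1401.0360 — 3 statements merged into one kernel-verified Lean document; each statement's English description precedes it below -/
import Mathlib

section
/- Let ρ : [0,∞) → [0,∞) be bounded and measurable with ∫_{ℝ^d} ρ(|z|²) |z|² dz < ∞, and let φ ∈ C_c^∞(ℝ^d, ℝ). Then lim_{t→0⁺} (2t)^{-1} ∫_{ℝ^d} ∫_{ℝ^d} t^{-d/2} ρ(|x−y|² t^{-1}) |φ(x) − φ(y)|² dx dy = (2d)^{-1} ( ∫_{ℝ^d} ρ(|z|²) |z|² dz ) ∫_{ℝ^d} |∇φ(x)|² dx. -/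
open MeasureTheory Real Filter
open scoped ENNReal Topology

namespace NFAux

variable {d : ℕ}

lemma abs_coord_le_norm (z : EuclideanSpace ℝ (Fin d)) (i : Fin d) : |z i| ≤ ‖z‖ := by
  rw [EuclideanSpace.norm_eq, ← Real.sqrt_sq_eq_abs]
  apply Real.sqrt_le_sqrt
  calc (z i) ^ 2 = ‖z i‖ ^ 2 := by rw [Real.norm_eq_abs, sq_abs]
  _ ≤ ∑ j, ‖z j‖ ^ 2 :=
      Finset.single_le_sum (f := fun j => ‖z j‖ ^ 2) (fun j _ => by positivity) (Finset.mem_univ i)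

lemma norm_sq_eq_sum (z : EuclideanSpace ℝ (Fin d)) : ‖z‖ ^ 2 = ∑ i, (z i) ^ 2 := by
  rw [EuclideanSpace.norm_eq, Real.sq_sqrt (by positivity)]
  simp [Real.norm_eq_abs, sq_abs]

lemma integral_coord_mul_eq_zero (f : ℝ → ℝ) {i j : Fin d} (hij : i ≠ j) :
    ∫ z : EuclideanSpace ℝ (Fin d), f ‖z‖ * (z i * z j) = 0 := by
  classical
  set T : EuclideanSpace ℝ (Fin d) ≃ₗᵢ[ℝ] EuclideanSpace ℝ (Fin d) :=
    LinearIsometryEquiv.piLpCongrRight 2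
      (fun k : Fin d => if k = i then LinearIsometryEquiv.neg ℝ (E := ℝ)
        else LinearIsometryEquiv.refl ℝ ℝ) with hTdef
  have hT : ∀ (z : EuclideanSpace ℝ (Fin d)) (k : Fin d),
      T z k = if k = i then -z k else z k := by
    intro z k
    rw [hTdef]
    rw [LinearIsometryEquiv.piLpCongrRight_apply]
    by_cases h : k = i
    · subst h; simp
    · simp [h]
  set g : EuclideanSpace ℝ (Fin d) → ℝ := fun z => f ‖z‖ * (z i * z j) with hg
  have hcomp : ∀ z, g (T z) = -g z := by
    intro z
    have h1 : T z i = -z i := by rw [hT]; simp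
    have h2 : T z j = z j := by rw [hT]; simp [hij.symm]
    simp only [hg, h1, h2, T.norm_map]
    ring
  have hmp : ∫ z, g (T z) = ∫ z, g z :=
    (T.measurePreserving).integral_comp T.toHomeomorph.measurableEmbedding g
  have : ∫ z, g z = -∫ z, g z := by
    calc ∫ z, g z = ∫ z, g (T z) := hmp.symm
    _ = ∫ z, -g z := by simp only [hcomp]
    _ = -∫ z, g z := integral_neg g
  linarith

lemma integral_coord_sq_eq (f : ℝ → ℝ) (i j : Fin d) :
    ∫ z : EuclideanSpace ℝ (Fin d), f ‖z‖ * (z i) ^ 2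
      = ∫ z : EuclideanSpace ℝ (Fin d), f ‖z‖ * (z j) ^ 2 := by
  classical
  set T : EuclideanSpace ℝ (Fin d) ≃ₗᵢ[ℝ] EuclideanSpace ℝ (Fin d) :=
    LinearIsometryEquiv.piLpCongrLeft 2 ℝ ℝ (Equiv.swap i j) with hTdef
  have hT : ∀ (z : EuclideanSpace ℝ (Fin d)) (k : Fin d),
      T z k = z (Equiv.swap i j k) := by
    intro z k
    rw [hTdef, LinearIsometryEquiv.piLpCongrLeft_apply]
    simp [Equiv.piCongrLeft']
  set g : EuclideanSpace ℝ (Fin d) → ℝ := fun z => f ‖z‖ * (z i) ^ 2 with hg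
  have hmp : ∫ z, g (T z) = ∫ z, g z :=
    (T.measurePreserving).integral_comp T.toHomeomorph.measurableEmbedding g
  have hcomp : ∀ z, g (T z) = f ‖z‖ * (z j) ^ 2 := by
    intro z
    simp only [hg, hT, T.norm_map]
    rw [Equiv.swap_apply_left]
  rw [← hmp]
  simp only [hcomp]






lemma diff_int (φ : EuclideanSpace ℝ (Fin d) → ℝ) (hφcont : Continuous φ)
    (hφc : HasCompactSupport φ) (h : EuclideanSpace ℝ (Fin d)) :
    Integrable (fun x : EuclideanSpace ℝ (Fin d) => (φ x - φ (x - h)) ^ 2) := by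
  have h1 : HasCompactSupport (fun x : EuclideanSpace ℝ (Fin d) => φ (x - h)) :=
    hφc.comp_homeomorph (Homeomorph.subRight h)
  have h1n : HasCompactSupport (fun x : EuclideanSpace ℝ (Fin d) => -φ (x - h)) := by
    simpa [Function.comp_def] using h1.comp_left (g := fun u : ℝ => -u) (by simp)
  have h2 : HasCompactSupport (fun x : EuclideanSpace ℝ (Fin d) => φ x - φ (x - h)) := by
    simpa [sub_eq_add_neg, Pi.add_def] using hφc.add h1n
  have h3 : HasCompactSupport (fun x : EuclideanSpace ℝ (Fin d) => (φ x - φ (x - h)) ^ 2) := by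
    simpa [Function.comp_def] using h2.comp_left (g := fun u : ℝ => u ^ 2) (by simp)
  exact ((hφcont.sub (hφcont.comp (continuous_id.sub continuous_const))).pow
    2).integrable_of_hasCompactSupport h3

lemma sq_diff_le {φ : EuclideanSpace ℝ (Fin d) → ℝ} {L : NNReal} (hLip : LipschitzWith L φ)
    (x y : EuclideanSpace ℝ (Fin d)) :
    (φ x - φ y) ^ 2 ≤ (L : ℝ) ^ 2 * ‖x - y‖ ^ 2 := by
  have h := hLip.dist_le_mul x y
  rw [Real.dist_eq, dist_eq_norm] at h
  calc (φ x - φ y) ^ 2 = |φ x - φ y| ^ 2 := (sq_abs _).symm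
  _ ≤ ((L : ℝ) * ‖x - y‖) ^ 2 := pow_le_pow_left₀ (abs_nonneg _) h 2
  _ = (L : ℝ) ^ 2 * ‖x - y‖ ^ 2 := mul_pow _ _ _

lemma Hbound (φ : EuclideanSpace ℝ (Fin d) → ℝ) (hφcont : Continuous φ)
    (hφc : HasCompactSupport φ) {L : NNReal} (hLip : LipschitzWith L φ)
    (h : EuclideanSpace ℝ (Fin d)) :
    ∫ x, (φ x - φ (x - h)) ^ 2
      ≤ (L : ℝ) ^ 2 * ‖h‖ ^ 2 * (2 * (volume (tsupport φ)).toReal) := by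
  set S := tsupport φ with hS
  have hSmeas : MeasurableSet S := (isClosed_tsupport φ).measurableSet
  have hSfin : volume S < ⊤ := hφc.measure_lt_top
  set U : Set (EuclideanSpace ℝ (Fin d)) := S ∪ ((fun x => x - h) ⁻¹' S) with hU
  have hUmeas : MeasurableSet U :=
    hSmeas.union (hSmeas.preimage (measurable_id.sub_const h))
  have hpre : volume ((fun x : EuclideanSpace ℝ (Fin d) => x - h) ⁻¹' S) = volume S := by
    have : (fun x : EuclideanSpace ℝ (Fin d) => x - h) = fun x => x + (-h) := by
      funext x; rw [sub_eq_add_neg]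
    rw [this]
    exact measure_preimage_add_right volume (-h) S
  have hUvol : volume U ≤ 2 * volume S := by
    calc volume U ≤ volume S + volume ((fun x : EuclideanSpace ℝ (Fin d) => x - h) ⁻¹' S) :=
        measure_union_le _ _
    _ = 2 * volume S := by rw [hpre, two_mul]
  have hUfin : volume U < ⊤ := lt_of_le_of_lt hUvol (by
    exact ENNReal.mul_lt_top (by norm_num) hSfin)
  have hle : ∀ x, (φ x - φ (x - h)) ^ 2
      ≤ U.indicator (fun _ => (L : ℝ) ^ 2 * ‖h‖ ^ 2) x := by
    intro x
    by_cases hx : x ∈ U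
    · rw [Set.indicator_of_mem hx]
      have := sq_diff_le hLip x (x - h)
      simpa using this
    · rw [Set.indicator_of_notMem hx]
      have h1 : φ x = 0 := image_eq_zero_of_notMem_tsupport fun hs => hx (Or.inl hs)
      have h2 : φ (x - h) = 0 := image_eq_zero_of_notMem_tsupport fun hs => hx (Or.inr hs)
      simp [h1, h2]
  have hind : Integrable (U.indicator (fun _ => (L : ℝ) ^ 2 * ‖h‖ ^ 2)) := by
    rw [integrable_indicator_iff hUmeas]
    exact integrableOn_const hUfin.ne
  calc ∫ x, (φ x - φ (x - h)) ^ 2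
      ≤ ∫ x, U.indicator (fun _ => (L : ℝ) ^ 2 * ‖h‖ ^ 2) x :=
        integral_mono (diff_int φ hφcont hφc h) hind hle
  _ = (volume U).toReal • ((L : ℝ) ^ 2 * ‖h‖ ^ 2) := integral_indicator_const _ hUmeas
  _ ≤ (2 * (volume S).toReal) * ((L : ℝ) ^ 2 * ‖h‖ ^ 2) := by
      rw [smul_eq_mul]
      apply mul_le_mul_of_nonneg_right _ (by positivity)
      rw [show (2 : ℝ) * (volume S).toReal = (2 * volume S).toReal by
        rw [ENNReal.toReal_mul]; norm_num]
      exact ENNReal.toReal_mono (by exact ENNReal.mul_ne_top (by norm_num) hSfin.ne) hUvol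
  _ = (L : ℝ) ^ 2 * ‖h‖ ^ 2 * (2 * (volume S).toReal) := by ring






lemma cov (ρ : ℝ → ℝ) (φ : EuclideanSpace ℝ (Fin d) → ℝ) {t : ℝ} (ht : 0 < t)
    (x : EuclideanSpace ℝ (Fin d)) :
    ∫ y : EuclideanSpace ℝ (Fin d),
        t ^ (-(d : ℝ) / 2) * ρ (‖x - y‖ ^ 2 / t) * (φ x - φ y) ^ 2
      = ∫ z : EuclideanSpace ℝ (Fin d),
          ρ (‖z‖ ^ 2) * (φ x - φ (x - Real.sqrt t • z)) ^ 2 := by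
  set s := Real.sqrt t with hs
  have hs0 : 0 < s := Real.sqrt_pos.2 ht
  have hsd : t ^ (-(d : ℝ) / 2) = ((s ^ d : ℝ))⁻¹ := by
    have h1 : (s : ℝ) ^ d = t ^ ((d : ℝ) / 2) := by
      rw [hs, Real.sqrt_eq_rpow, ← Real.rpow_natCast (t ^ (1 / (2:ℝ))) d,
        ← Real.rpow_mul ht.le]
      congr 1
      push_cast
      ring
    rw [h1, ← Real.rpow_neg ht.le, neg_div]
  set G : EuclideanSpace ℝ (Fin d) → ℝ :=
    fun w => (s ^ d)⁻¹ * ρ (‖w‖ ^ 2 / t) * (φ x - φ (x - w)) ^ 2 with hG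
  have step1 : ∫ y : EuclideanSpace ℝ (Fin d),
      t ^ (-(d : ℝ) / 2) * ρ (‖x - y‖ ^ 2 / t) * (φ x - φ y) ^ 2 = ∫ y, G (x - y) := by
    congr 1; funext y
    rw [hG]; simp only [sub_sub_cancel, hsd]
  have step2 : ∫ y, G (x - y) = ∫ w, G w := integral_sub_left_eq_self G volume x
  have hGs : ∀ z : EuclideanSpace ℝ (Fin d),
      G (s • z) = (s ^ d)⁻¹ * (ρ (‖z‖ ^ 2) * (φ x - φ (x - s • z)) ^ 2) := by
    intro z
    have hnorm : ‖s • z‖ ^ 2 / t = ‖z‖ ^ 2 := by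
      rw [norm_smul, Real.norm_eq_abs, abs_of_pos hs0, mul_pow, hs, Real.sq_sqrt ht.le]
      field_simp
    rw [hG]
    simp only [hnorm]
    ring
  have step3 : ∫ w, G w = s ^ d * ∫ z, G (s • z) := by
    have := MeasureTheory.Measure.integral_comp_smul_of_nonneg (volume : Measure (EuclideanSpace ℝ (Fin d)))
      G s (hR := hs0.le)
    rw [finrank_euclideanSpace_fin] at this
    rw [this, smul_eq_mul, ← mul_assoc, mul_inv_cancel₀ (by positivity), one_mul]
  rw [step1, step2, step3]
  have : ∫ z, G (s • z) = (s ^ d)⁻¹ * ∫ z, ρ (‖z‖ ^ 2) * (φ x - φ (x - s • z)) ^ 2 := by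
    simp only [hGs]
    exact integral_const_mul _ _
  rw [this, ← mul_assoc, mul_inv_cancel₀ (by positivity), one_mul]


lemma fub (ρ : ℝ → ℝ) (hρmeas : Measurable ρ) (hρnonneg : ∀ r, 0 ≤ ρ r)
    (hρint : Integrable (fun z : EuclideanSpace ℝ (Fin d) => ρ (‖z‖ ^ 2) * ‖z‖ ^ 2))
    (φ : EuclideanSpace ℝ (Fin d) → ℝ) (hφcont : Continuous φ)
    (hφc : HasCompactSupport φ) {L : NNReal} (hLip : LipschitzWith L φ) (s : ℝ) :
    Integrable (fun p : EuclideanSpace ℝ (Fin d) × EuclideanSpace ℝ (Fin d) =>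
      ρ (‖p.2‖ ^ 2) * (φ p.1 - φ (p.1 - s • p.2)) ^ 2) (volume.prod volume) := by
  have hcont2 : Continuous fun p : EuclideanSpace ℝ (Fin d) × EuclideanSpace ℝ (Fin d) =>
      (φ p.1 - φ (p.1 - s • p.2)) ^ 2 :=
    ((hφcont.comp continuous_fst).sub
      (hφcont.comp (continuous_fst.sub (continuous_snd.const_smul s)))).pow 2
  have hmeas : AEStronglyMeasurable
      (fun p : EuclideanSpace ℝ (Fin d) × EuclideanSpace ℝ (Fin d) =>
        ρ (‖p.2‖ ^ 2) * (φ p.1 - φ (p.1 - s • p.2)) ^ 2) (volume.prod volume) := by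
    exact ((hρmeas.comp ((measurable_snd.norm).pow_const 2)).aestronglyMeasurable.mul
      hcont2.aestronglyMeasurable)
  rw [integrable_prod_iff' hmeas]
  constructor
  · exact Filter.Eventually.of_forall fun z => by simpa using (diff_int φ hφcont hφc (s • z)).const_mul (ρ (‖z‖ ^ 2))
  · set K : ℝ := (volume (tsupport φ)).toReal with hK
    have hK0 : 0 ≤ K := ENNReal.toReal_nonneg
    have key : ∀ z : EuclideanSpace ℝ (Fin d),
        (∫ x, ‖ρ (‖z‖ ^ 2) * (φ x - φ (x - s • z)) ^ 2‖)
          = ρ (‖z‖ ^ 2) * ∫ x, (φ x - φ (x - s • z)) ^ 2 := by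
      intro z
      rw [← integral_const_mul]
      congr 1; funext x
      rw [Real.norm_of_nonneg (mul_nonneg (hρnonneg _) (sq_nonneg _))]
    have hsm : AEStronglyMeasurable
        (fun z : EuclideanSpace ℝ (Fin d) =>
          ρ (‖z‖ ^ 2) * ∫ x, (φ x - φ (x - s • z)) ^ 2) volume := by
      apply AEStronglyMeasurable.mul
      · exact (hρmeas.comp ((measurable_norm).pow_const 2)).aestronglyMeasurable
      · have hc : Continuous (fun q : EuclideanSpace ℝ (Fin d) × EuclideanSpace ℝ (Fin d) =>
            (φ q.2 - φ (q.2 - s • q.1)) ^ 2) :=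
          ((hφcont.comp continuous_snd).sub
            (hφcont.comp (continuous_snd.sub (continuous_fst.const_smul s)))).pow 2
        exact (hc.stronglyMeasurable.integral_prod_right').aestronglyMeasurable
    have hbint : Integrable (fun z : EuclideanSpace ℝ (Fin d) =>
        ((L : ℝ) ^ 2 * s ^ 2 * (2 * K)) * (ρ (‖z‖ ^ 2) * ‖z‖ ^ 2)) := hρint.const_mul _
    refine Integrable.mono' hbint ?_ ?_
    · simp only [key]; exact hsm
    · refine Filter.Eventually.of_forall fun z => ?_
      rw [key]
      have h0 : 0 ≤ ρ (‖z‖ ^ 2) * ∫ x, (φ x - φ (x - s • z)) ^ 2 :=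
        mul_nonneg (hρnonneg _) (integral_nonneg fun x => sq_nonneg _)
      rw [Real.norm_of_nonneg h0]
      have hb := Hbound φ hφcont hφc hLip (s • z)
      have : ρ (‖z‖ ^ 2) * (∫ x, (φ x - φ (x - s • z)) ^ 2)
          ≤ ρ (‖z‖ ^ 2) * ((L : ℝ) ^ 2 * ‖s • z‖ ^ 2 * (2 * K)) :=
        mul_le_mul_of_nonneg_left hb (hρnonneg _)
      refine this.trans (le_of_eq ?_)
      rw [norm_smul, Real.norm_eq_abs, mul_pow, sq_abs]
      ring






lemma sqrt_tendsto : Tendsto Real.sqrt (𝓝[>] (0:ℝ)) (𝓝[>] (0:ℝ)) := by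
  refine tendsto_nhdsWithin_of_tendsto_nhds_of_eventually_within _
    ((Real.continuous_sqrt.tendsto' 0 0 Real.sqrt_zero).mono_left nhdsWithin_le_nhds) ?_
  filter_upwards [self_mem_nhdsWithin] with t ht
  exact Real.sqrt_pos.2 ht

lemma perz (φ : EuclideanSpace ℝ (Fin d) → ℝ) (hφ : ContDiff ℝ (⊤ : ℕ∞) φ)
    (hφc : HasCompactSupport φ) {L : NNReal} (hLip : LipschitzWith L φ)
    (z : EuclideanSpace ℝ (Fin d)) :
    Tendsto (fun t : ℝ => (2 * t)⁻¹ * ∫ x, (φ x - φ (x - Real.sqrt t • z)) ^ 2)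
      (𝓝[>] (0:ℝ)) (𝓝 ((1/2) * ∫ x, (fderiv ℝ φ x z) ^ 2)) := by
  have hφcont : Continuous φ := hφ.continuous
  have hφdiff : Differentiable ℝ φ := hφ.differentiable (by simp)
  set C : Set (EuclideanSpace ℝ (Fin d)) := Metric.cthickening ‖z‖ (tsupport φ) with hC
  have hCcompact : IsCompact C := hφc.cthickening
  have hCmeas : MeasurableSet C := Metric.isClosed_cthickening.measurableSet
  set F : ℝ → EuclideanSpace ℝ (Fin d) → ℝ :=
    fun t x => (1/2) * ((φ x - φ (x - Real.sqrt t • z)) / Real.sqrt t) ^ 2 with hF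
  have key : Tendsto (fun t : ℝ => ∫ x, F t x) (𝓝[>] (0:ℝ))
      (𝓝 ((1/2) * ∫ x, (fderiv ℝ φ x z) ^ 2)) := by
    have target_eq : (1/2) * ∫ x, (fderiv ℝ φ x z) ^ 2
        = ∫ x, (1/2) * (fderiv ℝ φ x z) ^ 2 := (integral_const_mul _ _).symm
    rw [target_eq]
    apply tendsto_integral_filter_of_dominated_convergence
      (bound := C.indicator fun _ => (1/2) * ((L : ℝ) * ‖z‖) ^ 2)
    · refine Filter.Eventually.of_forall fun t => ?_
      exact (continuous_const.mul (((hφcont.sub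
        (hφcont.comp (continuous_id.sub continuous_const))).div_const _).pow
          2)).aestronglyMeasurable
    · filter_upwards [Ioo_mem_nhdsGT_of_mem
        (show (0:ℝ) ∈ Set.Ico 0 1 from ⟨le_rfl, zero_lt_one⟩)] with t ht
      refine Filter.Eventually.of_forall fun x => ?_
      have hs0 : 0 < Real.sqrt t := Real.sqrt_pos.2 ht.1
      have hs1 : Real.sqrt t ≤ 1 := by
        rw [show (1:ℝ) = Real.sqrt 1 from Real.sqrt_one.symm]
        exact Real.sqrt_le_sqrt ht.2.le
      by_cases hx : x ∈ C
      · rw [Set.indicator_of_mem hx]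
        have hd : |φ x - φ (x - Real.sqrt t • z)| ≤ (L : ℝ) * (Real.sqrt t * ‖z‖) := by
          have := hLip.dist_le_mul x (x - Real.sqrt t • z)
          rw [Real.dist_eq, dist_eq_norm] at this
          simpa [norm_smul, abs_of_pos hs0] using this
        have habs : |(φ x - φ (x - Real.sqrt t • z)) / Real.sqrt t| ≤ (L : ℝ) * ‖z‖ := by
          rw [abs_div, abs_of_pos hs0, div_le_iff₀ hs0]
          calc |φ x - φ (x - Real.sqrt t • z)| ≤ (L : ℝ) * (Real.sqrt t * ‖z‖) := hd
          _ = (L : ℝ) * ‖z‖ * Real.sqrt t := by ring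
        rw [hF, Real.norm_eq_abs]
        have h1 : ((φ x - φ (x - Real.sqrt t • z)) / Real.sqrt t) ^ 2 ≤ ((L:ℝ) * ‖z‖)^2 := by
          rw [← sq_abs]
          exact pow_le_pow_left₀ (abs_nonneg _) habs 2
        rw [abs_of_nonneg (by positivity)]
        nlinarith
      · rw [Set.indicator_of_notMem hx]
        have h1 : φ x = 0 := image_eq_zero_of_notMem_tsupport fun hs =>
          hx (Metric.self_subset_cthickening _ hs)
        have h2 : φ (x - Real.sqrt t • z) = 0 := by
          apply image_eq_zero_of_notMem_tsupport
          intro hs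
          apply hx
          refine Metric.mem_cthickening_of_dist_le x (x - Real.sqrt t • z) ‖z‖ _ hs ?_
          rw [dist_eq_norm, sub_sub_cancel, norm_smul, Real.norm_eq_abs, abs_of_pos hs0]
          exact mul_le_of_le_one_left (norm_nonneg z) hs1
        simp [hF, h1, h2]
    · rw [integrable_indicator_iff hCmeas]
      exact integrableOn_const hCcompact.measure_lt_top.ne
    · refine Filter.Eventually.of_forall fun x => ?_
      have hder : HasDerivAt (fun s : ℝ => φ (x - s • z)) (-(fderiv ℝ φ x z)) 0 := by
        have h1 : HasDerivAt (fun s : ℝ => x - s • z) (-z) 0 := by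
          simpa using ((hasDerivAt_id (0:ℝ)).smul_const z).const_sub x
        have h2 := (hφdiff x).hasFDerivAt
        have h2' : HasFDerivAt φ (fderiv ℝ φ x) (x - (0:ℝ) • z) := by simpa using h2
        have := h2'.comp_hasDerivAt 0 h1
        simpa [Function.comp_def] using this
      have hslope := hasDerivAt_iff_tendsto_slope.1 hder
      have hneg : Tendsto (fun s : ℝ => (φ x - φ (x - s • z)) / s) (𝓝[≠] (0:ℝ))
          (𝓝 (fderiv ℝ φ x z)) := by
        have : (fun s : ℝ => (φ x - φ (x - s • z)) / s)
            = fun s => -(slope (fun s : ℝ => φ (x - s • z)) 0 s) := by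
          funext s
          rw [slope_def_field]
          simp only [zero_smul, sub_zero]
          ring
        rw [this]
        simpa using hslope.neg
      have hcomp : Tendsto (fun t : ℝ => (φ x - φ (x - Real.sqrt t • z)) / Real.sqrt t)
          (𝓝[>] (0:ℝ)) (𝓝 (fderiv ℝ φ x z)) := by
        have hmono : Tendsto (fun s : ℝ => (φ x - φ (x - s • z)) / s) (𝓝[>] (0:ℝ))
            (𝓝 (fderiv ℝ φ x z)) :=
          hneg.mono_left (nhdsWithin_mono 0 fun u hu => ne_of_gt hu)
        exact hmono.comp sqrt_tendsto
      have := (hcomp.pow 2).const_mul (1/2 : ℝ)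
      simpa [hF] using this
  have ev : (fun t : ℝ => (2 * t)⁻¹ * ∫ x, (φ x - φ (x - Real.sqrt t • z)) ^ 2)
      =ᶠ[𝓝[>] (0:ℝ)] fun t => ∫ x, F t x := by
    filter_upwards [self_mem_nhdsWithin] with t ht
    rw [← integral_const_mul]
    congr 1; funext x
    rw [hF]
    have hs : Real.sqrt t ^ 2 = t := Real.sq_sqrt ht.le
    have ht0 : (t:ℝ) ≠ 0 := ne_of_gt ht
    simp only [div_pow, hs]
    field_simp
  exact key.congr' ev.symm


lemma limit_value (hd : 1 ≤ d) (ρ : ℝ → ℝ) (hρmeas : Measurable ρ) (hρnonneg : ∀ r, 0 ≤ ρ r)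
    (hρint : Integrable (fun z : EuclideanSpace ℝ (Fin d) => ρ (‖z‖ ^ 2) * ‖z‖ ^ 2))
    (φ : EuclideanSpace ℝ (Fin d) → ℝ) (hφ : ContDiff ℝ (⊤ : ℕ∞) φ) (hφc : HasCompactSupport φ) :
    ∫ z : EuclideanSpace ℝ (Fin d), ρ (‖z‖ ^ 2) * ((1/2) * ∫ x, (fderiv ℝ φ x z) ^ 2)
      = (2 * (d : ℝ))⁻¹ * (∫ z : EuclideanSpace ℝ (Fin d), ρ (‖z‖ ^ 2) * ‖z‖ ^ 2) *
          ∫ x : EuclideanSpace ℝ (Fin d), ‖gradient φ x‖ ^ 2 := by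
  classical
  set G : EuclideanSpace ℝ (Fin d) → EuclideanSpace ℝ (Fin d) := gradient φ with hGdef
  have hGeq : ∀ x, G x = (InnerProductSpace.toDual ℝ _).symm (fderiv ℝ φ x) := fun x => rfl
  have hGcont : Continuous G := by
    have : Continuous (fderiv ℝ φ) := hφ.continuous_fderiv (by simp)
    exact (LinearIsometryEquiv.continuous _).comp this
  have hGsupp : HasCompactSupport G := by
    have := (hφc.fderiv ℝ).comp_left
      (g := (InnerProductSpace.toDual ℝ (EuclideanSpace ℝ (Fin d))).symm) (map_zero _)
    exact this
  have hmc : ∀ i : Fin d, Measurable fun z : EuclideanSpace ℝ (Fin d) => z i :=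
    fun i => (EuclideanSpace.proj (𝕜 := ℝ) i).continuous.measurable
  -- coordinate expansion of the derivative
  have hfd : ∀ (x z : EuclideanSpace ℝ (Fin d)), fderiv ℝ φ x z = ∑ i, G x i * z i := by
    intro x z
    have h1 : fderiv ℝ φ x z = (inner ℝ (G x) z : ℝ) := by
      rw [hGeq x, InnerProductSpace.toDual_symm_apply]
    rw [h1, PiLp.inner_apply]
    simp [RCLike.inner_apply, mul_comm]
  -- the matrix M
  set M : Fin d → Fin d → ℝ := fun i j => ∫ x, G x i * G x j with hM
  have hGicont : ∀ i : Fin d, Continuous fun x => G x i := fun i =>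
    (EuclideanSpace.proj (𝕜 := ℝ) i).continuous.comp hGcont
  have hGisupp : ∀ i : Fin d, HasCompactSupport fun x => G x i := by
    intro i
    have := hGsupp.comp_left (g := fun v : EuclideanSpace ℝ (Fin d) => v i) rfl
    simpa [Function.comp_def] using this
  have hMint : ∀ i j : Fin d, Integrable fun x => G x i * G x j := fun i j =>
    ((hGicont i).mul (hGicont j)).integrable_of_hasCompactSupport ((hGisupp i).mul_right)
  -- expansion of the x-integral
  have hint_x : ∀ z : EuclideanSpace ℝ (Fin d),
      ∫ x, (fderiv ℝ φ x z) ^ 2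
        = ∑ p : Fin d × Fin d, (z p.1 * z p.2) * M p.1 p.2 := by
    intro z
    have h1 : ∀ x : EuclideanSpace ℝ (Fin d), (fderiv ℝ φ x z) ^ 2
        = ∑ p : Fin d × Fin d, (z p.1 * z p.2) * (G x p.1 * G x p.2) := by
      intro x
      rw [hfd, pow_two, Finset.sum_mul_sum, Fintype.sum_prod_type]
      apply Finset.sum_congr rfl
      intro i _
      apply Finset.sum_congr rfl
      intro j _
      ring
    calc ∫ x, (fderiv ℝ φ x z) ^ 2
        = ∫ x, ∑ p : Fin d × Fin d, (z p.1 * z p.2) * (G x p.1 * G x p.2) := by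
          simp only [h1]
    _ = ∑ p : Fin d × Fin d, ∫ x, (z p.1 * z p.2) * (G x p.1 * G x p.2) :=
          integral_finset_sum _ fun p _ => (hMint p.1 p.2).const_mul _
    _ = ∑ p : Fin d × Fin d, (z p.1 * z p.2) * M p.1 p.2 := by
          apply Finset.sum_congr rfl
          intro p _
          rw [integral_const_mul]
  -- integrability of the coefficient functions
  have hcint : ∀ i j : Fin d, Integrable fun z : EuclideanSpace ℝ (Fin d) =>
      ρ (‖z‖ ^ 2) * (z i * z j) := by
    intro i j
    refine hρint.mono' ?_ ?_
    · exact ((hρmeas.comp (measurable_norm.pow_const 2)).mul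
        ((hmc i).mul (hmc j))).aestronglyMeasurable
    · refine Filter.Eventually.of_forall fun z => ?_
      rw [Real.norm_eq_abs, abs_mul, abs_of_nonneg (hρnonneg _), abs_mul]
      have h1 : |z i| * |z j| ≤ ‖z‖ * ‖z‖ :=
        mul_le_mul (abs_coord_le_norm z i) (abs_coord_le_norm z j) (abs_nonneg _)
          (norm_nonneg _)
      calc ρ (‖z‖ ^ 2) * (|z i| * |z j|) ≤ ρ (‖z‖ ^ 2) * (‖z‖ * ‖z‖) :=
            mul_le_mul_of_nonneg_left h1 (hρnonneg _)
      _ = ρ (‖z‖ ^ 2) * ‖z‖ ^ 2 := by ring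
  set c : Fin d → Fin d → ℝ := fun i j => ∫ z : EuclideanSpace ℝ (Fin d),
    ρ (‖z‖ ^ 2) * (z i * z j) with hc
  set Ctot : ℝ := ∫ z : EuclideanSpace ℝ (Fin d), ρ (‖z‖ ^ 2) * ‖z‖ ^ 2 with hCtot
  have hczero : ∀ i j : Fin d, i ≠ j → c i j = 0 := by
    intro i j hij
    have := integral_coord_mul_eq_zero (d := d) (fun r => ρ (r ^ 2)) hij
    simpa [hc] using this
  have hcdiag : ∀ i j : Fin d, c i i = c j j := by
    intro i j
    have := integral_coord_sq_eq (d := d) (fun r => ρ (r ^ 2)) i j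
    simpa [hc, pow_two] using this
  have hsum_c : ∑ i : Fin d, c i i = Ctot := by
    rw [hc, ← integral_finset_sum _ fun i _ => hcint i i]
    rw [hCtot]
    congr 1; funext z
    rw [← Finset.mul_sum, norm_sq_eq_sum]
    congr 1
    apply Finset.sum_congr rfl
    intro i _
    ring
  have hd0 : (d : ℝ) ≠ 0 := by
    have : 0 < d := hd
    positivity
  have hcval : ∀ i : Fin d, c i i = Ctot / d := by
    intro i
    have h1 : ∑ j : Fin d, c j j = ∑ j : Fin d, c i i :=
      Finset.sum_congr rfl fun j _ => (hcdiag j i).trans rfl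
    rw [hsum_c] at h1
    rw [Finset.sum_const, Finset.card_univ, Fintype.card_fin, nsmul_eq_mul] at h1
    field_simp
    linarith
  -- main computation
  calc ∫ z : EuclideanSpace ℝ (Fin d), ρ (‖z‖ ^ 2) * ((1/2) * ∫ x, (fderiv ℝ φ x z) ^ 2)
      = ∫ z : EuclideanSpace ℝ (Fin d),
          ∑ p : Fin d × Fin d, ((1/2) * M p.1 p.2) * (ρ (‖z‖ ^ 2) * (z p.1 * z p.2)) := by
        congr 1; funext z
        rw [hint_x z, Finset.mul_sum, Finset.mul_sum]
        apply Finset.sum_congr rfl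
        intro p _
        ring
  _ = ∑ p : Fin d × Fin d, ((1/2) * M p.1 p.2) * c p.1 p.2 := by
        rw [integral_finset_sum _ fun p _ => (hcint p.1 p.2).const_mul _]
        apply Finset.sum_congr rfl
        intro p _
        rw [integral_const_mul]
  _ = ∑ i : Fin d, ((1/2) * M i i) * (Ctot / d) := by
        rw [Fintype.sum_prod_type]
        apply Finset.sum_congr rfl
        intro i _
        rw [Finset.sum_eq_single i]
        · rw [hcval i]
        · intro j _ hj
          rw [hczero i j (fun h => hj h.symm), mul_zero]
        · intro h
          exact absurd (Finset.mem_univ i) h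
  _ = (2 * (d : ℝ))⁻¹ * Ctot * ∑ i : Fin d, M i i := by
        rw [← Finset.sum_mul, ← Finset.mul_sum]
        field_simp
  _ = (2 * (d : ℝ))⁻¹ * Ctot * ∫ x : EuclideanSpace ℝ (Fin d), ‖G x‖ ^ 2 := by
        congr 1
        rw [hM, ← integral_finset_sum _ fun i _ => hMint i i]
        congr 1; funext x
        rw [norm_sq_eq_sum]
        apply Finset.sum_congr rfl
        intro i _
        ring


end NFAux

open NFAux

set_option maxHeartbeats 1000000 in
/-- As `t → 0⁺`, the rescaled nonlocal forms `(2t)^{-1} ∫∫ t^{-d/2} ρ(|x-y|²/t) |φ(x)-φ(y)|²`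
converge to `(2d)^{-1} (∫ ρ(|z|²)|z|² dz) ∫ |∇φ|²`. -/
theorem nonlocal_form_tendsto_dirichlet_form
    (d : ℕ) (hd : 1 ≤ d)
    (ρ : ℝ → ℝ) (hρmeas : Measurable ρ) (hρnonneg : ∀ r, 0 ≤ ρ r)
    (hρbdd : ∃ B : ℝ, ∀ r, ρ r ≤ B)
    (hρint : Integrable (fun z : EuclideanSpace ℝ (Fin d) => ρ (‖z‖ ^ 2) * ‖z‖ ^ 2))
    (φ : EuclideanSpace ℝ (Fin d) → ℝ) (hφ : ContDiff ℝ (⊤ : ℕ∞) φ) (hφc : HasCompactSupport φ) :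
    Tendsto (fun t : ℝ =>
        (2 * t)⁻¹ *
          ∫ x : EuclideanSpace ℝ (Fin d), ∫ y : EuclideanSpace ℝ (Fin d),
            t ^ (-(d : ℝ) / 2) * ρ (‖x - y‖ ^ 2 / t) * (φ x - φ y) ^ 2)
      (𝓝[>] (0 : ℝ))
      (𝓝 ((2 * (d : ℝ))⁻¹ * (∫ z : EuclideanSpace ℝ (Fin d), ρ (‖z‖ ^ 2) * ‖z‖ ^ 2) *
        ∫ x : EuclideanSpace ℝ (Fin d), ‖gradient φ x‖ ^ 2)) := by
  obtain ⟨L, hLip⟩ := ContDiff.lipschitzWith_of_hasCompactSupport hφc hφ (by simp)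
  have hφcont : Continuous φ := hφ.continuous
  set K : ℝ := (volume (tsupport φ)).toReal with hK
  have hK0 : 0 ≤ K := ENNReal.toReal_nonneg
  set Fz : ℝ → EuclideanSpace ℝ (Fin d) → ℝ := fun t z =>
    ρ (‖z‖ ^ 2) * ((2 * t)⁻¹ * ∫ x, (φ x - φ (x - Real.sqrt t • z)) ^ 2) with hFz
  have key : Tendsto (fun t => ∫ z, Fz t z) (𝓝[>] (0:ℝ))
      (𝓝 (∫ z : EuclideanSpace ℝ (Fin d),
        ρ (‖z‖ ^ 2) * ((1/2) * ∫ x, (fderiv ℝ φ x z) ^ 2))) := by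
    apply tendsto_integral_filter_of_dominated_convergence
      (bound := fun z : EuclideanSpace ℝ (Fin d) => (ρ (‖z‖ ^ 2) * ‖z‖ ^ 2) * ((L : ℝ) ^ 2 * K))
    · refine Filter.Eventually.of_forall fun t => ?_
      apply AEStronglyMeasurable.mul
      · exact (hρmeas.comp (measurable_norm.pow_const 2)).aestronglyMeasurable
      · apply AEStronglyMeasurable.const_mul
        have hc : Continuous
            (fun q : EuclideanSpace ℝ (Fin d) × EuclideanSpace ℝ (Fin d) =>
              (φ q.2 - φ (q.2 - Real.sqrt t • q.1)) ^ 2) :=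
          ((hφcont.comp continuous_snd).sub
            (hφcont.comp (continuous_snd.sub (continuous_fst.const_smul (Real.sqrt t))))).pow 2
        exact (hc.stronglyMeasurable.integral_prod_right').aestronglyMeasurable
    · filter_upwards [self_mem_nhdsWithin] with t ht
      refine Filter.Eventually.of_forall fun z => ?_
      have ht0 : (0:ℝ) < t := ht
      have hH0 : 0 ≤ ∫ x, (φ x - φ (x - Real.sqrt t • z)) ^ 2 :=
        integral_nonneg fun x => sq_nonneg _
      have h2t : (0:ℝ) < 2 * t := by positivity
      rw [hFz, Real.norm_of_nonneg (mul_nonneg (hρnonneg _)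
        (mul_nonneg (inv_nonneg.2 h2t.le) hH0))]
      have hb := Hbound φ hφcont hφc hLip (Real.sqrt t • z)
      have hb2 : (2*t)⁻¹ * (∫ x, (φ x - φ (x - Real.sqrt t • z)) ^ 2)
          ≤ (2*t)⁻¹ * ((L:ℝ)^2 * ‖Real.sqrt t • z‖^2 * (2 * K)) :=
        mul_le_mul_of_nonneg_left hb (inv_nonneg.2 h2t.le)
      have heq : (2*t)⁻¹ * ((L:ℝ)^2 * ‖Real.sqrt t • z‖^2 * (2 * K))
          = (‖z‖^2) * ((L:ℝ)^2 * K) := by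
        rw [norm_smul, Real.norm_eq_abs, abs_of_pos (Real.sqrt_pos.2 ht0), mul_pow,
          Real.sq_sqrt ht0.le]
        field_simp
      calc ρ (‖z‖ ^ 2) * ((2 * t)⁻¹ * ∫ x, (φ x - φ (x - Real.sqrt t • z)) ^ 2)
          ≤ ρ (‖z‖ ^ 2) * ((‖z‖^2) * ((L:ℝ)^2 * K)) := by
            apply mul_le_mul_of_nonneg_left _ (hρnonneg _)
            rw [← heq]
            exact hb2
      _ = (ρ (‖z‖ ^ 2) * ‖z‖ ^ 2) * ((L : ℝ) ^ 2 * K) := by ring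
    · exact hρint.mul_const ((L : ℝ) ^ 2 * K)
    · refine Filter.Eventually.of_forall fun z => ?_
      exact (perz φ hφ hφc hLip z).const_mul _
  rw [limit_value hd ρ hρmeas hρnonneg hρint φ hφ hφc] at key
  apply key.congr'
  filter_upwards [self_mem_nhdsWithin] with t ht
  have ht0 : (0:ℝ) < t := ht
  calc ∫ z, Fz t z
      = ∫ z : EuclideanSpace ℝ (Fin d), (2*t)⁻¹ *
          ∫ x, ρ (‖z‖ ^ 2) * (φ x - φ (x - Real.sqrt t • z)) ^ 2 := by
        congr 1; funext z
        rw [hFz, integral_const_mul]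
        ring
  _ = (2*t)⁻¹ * ∫ z : EuclideanSpace ℝ (Fin d),
          ∫ x, ρ (‖z‖ ^ 2) * (φ x - φ (x - Real.sqrt t • z)) ^ 2 :=
        integral_const_mul _ _
  _ = (2*t)⁻¹ * ∫ x : EuclideanSpace ℝ (Fin d),
          ∫ z : EuclideanSpace ℝ (Fin d), ρ (‖z‖ ^ 2) * (φ x - φ (x - Real.sqrt t • z)) ^ 2 := by
        have hsw := (fub ρ hρmeas hρnonneg hρint φ hφcont hφc hLip (Real.sqrt t)).swap
        congr 1
        exact integral_integral_swap (f := fun (z x : EuclideanSpace ℝ (Fin d)) =>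
          ρ (‖z‖ ^ 2) * (φ x - φ (x - Real.sqrt t • z)) ^ 2) (by exact hsw)
  _ = (2 * t)⁻¹ * ∫ x : EuclideanSpace ℝ (Fin d), ∫ y : EuclideanSpace ℝ (Fin d),
          t ^ (-(d : ℝ) / 2) * ρ (‖x - y‖ ^ 2 / t) * (φ x - φ y) ^ 2 := by
        congr 1
        apply integral_congr_ae
        refine Filter.Eventually.of_forall fun x => ?_
        exact (cov ρ φ ht0 x).symm
end

section
/- Let ν : [0,∞) → [0,∞) be nondecreasing, ρ(s) = ∫₀^s (1+ν(t))^{-1/2} dt, and B_ρ(r) = {x ∈ ℝ^d : ρ(|x|) < r}. If there is c > 0 such that ν(s) ≤ c (1+s)² log(2+s) for all s ≥ 0, then the Tikhonov growth condition holds: there exist a, b > 0 such that |B_ρ(r)| ≤ a e^{b r²} for all r ≥ 1. -/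
open MeasureTheory Real Filter
open scoped ENNReal Topology

/-- If `ν(s) ≤ c (1+s)² log(2+s)`, then the Tikhonov volume growth condition
`|B_ρ(r)| ≤ a e^{b r²}` holds for all `r ≥ 1`. -/
theorem tikhonov_of_coefficient_growth
    (d : ℕ) (hd : 1 ≤ d)
    (ν : ℝ → ℝ) (hν0 : ∀ t, 0 ≤ ν t) (hνmono : MonotoneOn ν (Set.Ici (0 : ℝ)))
    (ρ : ℝ → ℝ) (hρ : ∀ s, ρ s = ∫ t in (0 : ℝ)..s, (1 + ν t) ^ (-(1 : ℝ) / 2))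
    (c : ℝ) (hc : 0 < c)
    (hν : ∀ s : ℝ, 0 ≤ s → ν s ≤ c * (1 + s) ^ 2 * Real.log (2 + s)) :
    ∃ a b : ℝ, 0 < a ∧ 0 < b ∧ ∀ r : ℝ, 1 ≤ r →
      volume {x : EuclideanSpace ℝ (Fin d) | ρ ‖x‖ < r} ≤
        ENNReal.ofReal (a * Real.exp (b * r ^ 2)) := by
  have hlog2 : (0 : ℝ) < Real.log 2 := Real.log_pos one_lt_two
  set c' : ℝ := c + 1 / Real.log 2 with hc'def
  have hc' : 0 < c' := by positivity
  have hsc' : 0 < Real.sqrt c' := Real.sqrt_pos.mpr hc'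
  -- the comparison derivative
  set F' : ℝ → ℝ := fun t => 1 / Real.sqrt c' * ((2 + t) * Real.sqrt (Real.log (2 + t)))⁻¹
    with hF'def
  -- basic facts for t ≥ 0
  have hLpos : ∀ t : ℝ, 0 ≤ t → 0 < Real.log (2 + t) := by
    intro t ht
    exact Real.log_pos (by linarith)
  -- key lower bound on ρ
  have key : ∀ s : ℝ, 0 ≤ s →
      2 / Real.sqrt c' * (Real.sqrt (Real.log (2 + s)) - Real.sqrt (Real.log 2)) ≤ ρ s := by
    intro s hs
    rw [hρ]
    -- antitone integrand, hence integrable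
    have hint : IntervalIntegrable (fun t => (1 + ν t) ^ (-(1 : ℝ) / 2)) volume 0 s := by
      apply AntitoneOn.intervalIntegrable
      rw [Set.uIcc_of_le hs]
      intro x hx y hy hxy
      have hx0 : (0:ℝ) ≤ x := hx.1
      have hy0 : (0:ℝ) ≤ y := hy.1
      have := hνmono (Set.mem_Ici.mpr hx0) (Set.mem_Ici.mpr hy0) hxy
      exact Real.rpow_le_rpow_of_nonpos (by nlinarith [hν0 x]) (by linarith)
        (by norm_num)
    -- continuity of F' on [0, s]
    have hcont : ContinuousOn F' (Set.uIcc 0 s) := by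
      rw [Set.uIcc_of_le hs]
      apply ContinuousOn.mul continuousOn_const
      apply ContinuousOn.inv₀
      · apply ContinuousOn.mul
        · exact (continuous_const.add continuous_id).continuousOn
        · exact Real.continuous_sqrt.comp_continuousOn
            (((continuous_const.add continuous_id).continuousOn).log
              (fun x hx => by have h := hx.1; exact (by linarith : (0:ℝ) < 2 + x).ne'))
      · intro x hx
        have hL := hLpos x hx.1
        have h1 : (0:ℝ) < 2 + x := by have := hx.1; linarith
        have h2 : 0 < Real.sqrt (Real.log (2 + x)) := Real.sqrt_pos.mpr hL
        exact (mul_pos h1 h2).ne'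
    have hintF' : IntervalIntegrable F' volume 0 s := hcont.intervalIntegrable
    -- pointwise comparison on [0, s]
    have hle : ∀ x ∈ Set.Icc 0 s, F' x ≤ (1 + ν x) ^ (-(1 : ℝ) / 2) := by
      intro x hx
      have hx0 : (0:ℝ) ≤ x := hx.1
      have hL := hLpos x hx0
      have hL2 : Real.log 2 ≤ Real.log (2 + x) :=
        Real.log_le_log (by norm_num) (by linarith)
      have h1 : 1 + ν x ≤ c' * (2 + x) ^ 2 * Real.log (2 + x) := by
        have h2 : ν x ≤ c * (1 + x) ^ 2 * Real.log (2 + x) := hν x hx0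
        have h3 : c * (1 + x) ^ 2 * Real.log (2 + x) ≤ c * (2 + x) ^ 2 * Real.log (2 + x) := by
          have h3a : (1 + x) ^ 2 ≤ (2 + x) ^ 2 := by nlinarith
          exact mul_le_mul_of_nonneg_right
            (mul_le_mul_of_nonneg_left h3a hc.le) hL.le
        have h4 : (1 : ℝ) ≤ 1 / Real.log 2 * (2 + x) ^ 2 * Real.log (2 + x) := by
          rw [div_mul_eq_mul_div, div_mul_eq_mul_div, le_div_iff₀ hlog2]
          nlinarith
        rw [hc'def]; nlinarith
      have hpos : 0 < c' * (2 + x) ^ 2 * Real.log (2 + x) := by positivity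
      have h5 : (c' * (2 + x) ^ 2 * Real.log (2 + x)) ^ (-(1 : ℝ) / 2) ≤
          (1 + ν x) ^ (-(1 : ℝ) / 2) :=
        Real.rpow_le_rpow_of_nonpos (by nlinarith [hν0 x]) h1 (by norm_num)
      refine le_trans (le_of_eq ?_) h5
      rw [hF'def]
      have hxpos : (0:ℝ) < 2 + x := by linarith
      rw [show (-(1:ℝ)/2) = -(1/2) by norm_num,
        Real.rpow_neg hpos.le, ← Real.sqrt_eq_rpow,
        Real.sqrt_mul (by positivity), Real.sqrt_mul hc'.le,
        Real.sqrt_sq hxpos.le]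
      simp only [mul_inv, one_div]
      ring
    -- FTC for F
    have hderiv : ∀ x ∈ Set.uIcc 0 s,
        HasDerivAt (fun t => 2 / Real.sqrt c' * Real.sqrt (Real.log (2 + t))) (F' x) x := by
      intro x hx
      rw [Set.uIcc_of_le hs] at hx
      have hx0 : (0:ℝ) ≤ x := hx.1
      have hL := hLpos x hx0
      have hxpos : (0:ℝ) < 2 + x := by linarith
      have h1 : HasDerivAt (fun t : ℝ => 2 + t) 1 x := (hasDerivAt_id x).const_add 2
      have h2 : HasDerivAt (fun t : ℝ => Real.log (2 + t)) ((2 + x)⁻¹ * 1) x :=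
        (Real.hasDerivAt_log hxpos.ne').comp x h1
      have h3 : HasDerivAt (fun t : ℝ => Real.sqrt (Real.log (2 + t)))
          (1 / (2 * Real.sqrt (Real.log (2 + x))) * ((2 + x)⁻¹ * 1)) x :=
        (Real.hasDerivAt_sqrt hL.ne').comp x h2
      have h4 := h3.const_mul (2 / Real.sqrt c')
      refine h4.congr_deriv ?_
      rw [hF'def]
      have hsL : 0 < Real.sqrt (Real.log (2 + x)) := Real.sqrt_pos.mpr hL
      field_simp
    have hFTC := intervalIntegral.integral_eq_sub_of_hasDerivAt hderiv hintF'
    have hmono := intervalIntegral.integral_mono_on hs hintF' hint hle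
    have hF0 : Real.sqrt (Real.log (2 + (0:ℝ))) = Real.sqrt (Real.log 2) := by norm_num
    calc 2 / Real.sqrt c' * (Real.sqrt (Real.log (2 + s)) - Real.sqrt (Real.log 2))
        = ∫ t in (0:ℝ)..s, F' t := by rw [hFTC, hF0]; ring
      _ ≤ _ := hmono
  -- constants
  set M : ℝ := Real.sqrt c' / 2 + Real.sqrt (Real.log 2) with hMdef
  have hM : 0 < M := by positivity
  set V : ℝ := (volume (Metric.ball (0 : EuclideanSpace ℝ (Fin d)) 1)).toReal with hVdef
  have hVfin : volume (Metric.ball (0 : EuclideanSpace ℝ (Fin d)) 1) < ⊤ :=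
    measure_ball_lt_top
  have hVpos : 0 < V :=
    ENNReal.toReal_pos (Metric.measure_ball_pos volume 0 one_pos).ne' hVfin.ne
  refine ⟨V, d * M ^ 2, hVpos, by positivity, ?_⟩
  intro r hr
  have hrpos : (0:ℝ) < r := by linarith
  -- the set is contained in a closed ball
  have hsub : {x : EuclideanSpace ℝ (Fin d) | ρ ‖x‖ < r} ⊆
      Metric.closedBall 0 (Real.exp (M ^ 2 * r ^ 2)) := by
    intro x hx
    simp only [Set.mem_setOf_eq] at hx
    set s := ‖x‖ with hsdef
    have hs0 : (0:ℝ) ≤ s := norm_nonneg x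
    have hk := key s hs0
    have h1 : Real.sqrt (Real.log (2 + s)) < r * M := by
      have h2 : 2 / Real.sqrt c' * (Real.sqrt (Real.log (2 + s)) - Real.sqrt (Real.log 2)) < r :=
        lt_of_le_of_lt hk hx
      have h3 : Real.sqrt (Real.log (2 + s)) - Real.sqrt (Real.log 2) <
          r * (Real.sqrt c' / 2) := by
        rw [div_mul_eq_mul_div, div_lt_iff₀ hsc'] at h2
        nlinarith
      have h4 : Real.sqrt (Real.log 2) ≤ r * Real.sqrt (Real.log 2) := by
        nlinarith [Real.sqrt_nonneg (Real.log 2)]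
      rw [hMdef]; nlinarith
    have hLs : (0:ℝ) ≤ Real.log (2 + s) := (hLpos s hs0).le
    have h5 : Real.log (2 + s) < M ^ 2 * r ^ 2 := by
      have := Real.sq_sqrt hLs
      nlinarith [Real.sqrt_nonneg (Real.log (2 + s))]
    have h6 : 2 + s < Real.exp (M ^ 2 * r ^ 2) := by
      calc 2 + s = Real.exp (Real.log (2 + s)) := (Real.exp_log (by linarith)).symm
        _ < _ := Real.exp_lt_exp.mpr h5
    rw [Metric.mem_closedBall, dist_zero_right]
    linarith
  have hR : (0:ℝ) ≤ Real.exp (M ^ 2 * r ^ 2) := (Real.exp_pos _).le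
  calc volume {x : EuclideanSpace ℝ (Fin d) | ρ ‖x‖ < r}
      ≤ volume (Metric.closedBall (0 : EuclideanSpace ℝ (Fin d)) (Real.exp (M ^ 2 * r ^ 2))) :=
        measure_mono hsub
    _ = ENNReal.ofReal (Real.exp (M ^ 2 * r ^ 2) ^
          Module.finrank ℝ (EuclideanSpace ℝ (Fin d))) *
          volume (Metric.ball (0 : EuclideanSpace ℝ (Fin d)) 1) :=
        Measure.addHaar_closedBall _ _ hR
    _ ≤ ENNReal.ofReal (V * Real.exp (d * M ^ 2 * r ^ 2)) := by
        rw [finrank_euclideanSpace_fin, ← ENNReal.ofReal_toReal hVfin.ne, ← hVdef,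
          ← ENNReal.ofReal_mul (by positivity)]
        apply ENNReal.ofReal_le_ofReal
        rw [← Real.exp_nat_mul]
        rw [mul_comm]
        apply mul_le_mul_of_nonneg_left _ hVpos.le
        apply Real.exp_le_exp.mpr
        push_cast
        ring_nf
        exact le_rfl
end

section
/- Let ν : [0,∞) → [0,∞) be nondecreasing and ρ(s) = ∫₀^s (1+ν(t))^{-1/2} dt. Let η : ℝ → ℝ be smooth with 0 ≤ η ≤ 1, η(s) = 1 for s ≤ 1, η(s) = 0 for s ≥ 2 and |η'| ≤ 2, and for R > 0 define η_R : ℝ^d → ℝ by η_R(x) = η(R^{-1} ρ(|x|)). Then η_R is Lipschitz continuous, and for almost every x ∈ ℝ^d the function η_R is differentiable at x with (1 + ν(|x|)) |∇η_R(x)|² ≤ 4 R^{-2}. -/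
open MeasureTheory Real Filter
open scoped ENNReal Topology NNReal

/-- The cutoff functions `η_R(x) = η(R⁻¹ ρ(|x|))` are Lipschitz continuous, and almost
everywhere differentiable with `(1 + ν(|x|)) |∇η_R(x)|² ≤ 4 R⁻²`. -/
theorem cutoff_lipschitz_and_gradient_bound
    (d : ℕ) (hd : 1 ≤ d)
    (ν : ℝ → ℝ) (hν0 : ∀ t, 0 ≤ ν t) (hνmono : MonotoneOn ν (Set.Ici (0 : ℝ)))
    (ρ : ℝ → ℝ) (hρ : ∀ s, ρ s = ∫ t in (0 : ℝ)..s, (1 + ν t) ^ (-(1 : ℝ) / 2))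
    (η : ℝ → ℝ) (hη : ContDiff ℝ (⊤ : ℕ∞) η) (hη01 : ∀ s, η s ∈ Set.Icc (0 : ℝ) 1)
    (hη1 : ∀ s : ℝ, s ≤ 1 → η s = 1) (hη2 : ∀ s : ℝ, 2 ≤ s → η s = 0)
    (hη' : ∀ s, |deriv η s| ≤ 2)
    (R : ℝ) (hR : 0 < R) :
    (∃ K : ℝ≥0, LipschitzWith K fun x : EuclideanSpace ℝ (Fin d) => η (R⁻¹ * ρ ‖x‖)) ∧
    ∀ᵐ x : EuclideanSpace ℝ (Fin d),
      DifferentiableAt ℝ (fun x : EuclideanSpace ℝ (Fin d) => η (R⁻¹ * ρ ‖x‖)) x ∧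
      (1 + ν ‖x‖) *
          ‖gradient (fun x : EuclideanSpace ℝ (Fin d) => η (R⁻¹ * ρ ‖x‖)) x‖ ^ 2
        ≤ 4 * (R ^ 2)⁻¹ := by
  classical
  haveI : Nonempty (Fin d) := ⟨⟨0, hd⟩⟩
  set E := EuclideanSpace ℝ (Fin d) with hE
  haveI : Nontrivial E := by
    refine ⟨0, EuclideanSpace.single ⟨0, hd⟩ 1, fun h => ?_⟩
    have : (0 : E) ⟨0, hd⟩ = EuclideanSpace.single (⟨0, hd⟩ : Fin d) (1:ℝ) ⟨0, hd⟩ := by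
      rw [h]
    rw [EuclideanSpace.single_apply] at this
    simp only [if_pos rfl] at this
    exact zero_ne_one (α := ℝ) this
  -- extend ν monotonically to all of ℝ
  set ν' : ℝ → ℝ := fun t => ν (max t 0) with hν'def
  have hν'mono : Monotone ν' := fun a b hab =>
    hνmono (Set.mem_Ici.2 (le_max_right _ _)) (Set.mem_Ici.2 (le_max_right _ _)) (max_le_max hab le_rfl)
  set g : ℝ → ℝ := fun t => (1 + ν' t) ^ (-(1 : ℝ) / 2) with hgdef
  have h1ν : ∀ t, (1 : ℝ) ≤ 1 + ν' t := fun t => le_add_of_nonneg_right (hν0 _)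
  have h1νpos : ∀ t, (0 : ℝ) < 1 + ν' t := fun t => lt_of_lt_of_le one_pos (h1ν t)
  have hgpos : ∀ t, 0 < g t := fun t => Real.rpow_pos_of_pos (h1νpos t) _
  have hgle1 : ∀ t, g t ≤ 1 := by
    intro t
    have := Real.rpow_le_rpow_of_nonpos one_pos (h1ν t) (by norm_num : (-(1:ℝ)/2) ≤ 0)
    simpa using this
  have hganti : Antitone g := by
    intro a b hab
    exact Real.rpow_le_rpow_of_nonpos (h1νpos a) (by linarith [hν'mono hab])
      (by norm_num : (-(1:ℝ)/2) ≤ 0)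
  set F : ℝ → ℝ := fun s => ∫ t in (0 : ℝ)..s, g t with hFdef
  have hint : ∀ a b : ℝ, IntervalIntegrable g volume a b := fun a b =>
    hganti.intervalIntegrable
  have hρF : ∀ s : ℝ, 0 ≤ s → ρ s = F s := by
    intro s hs
    rw [hρ s]
    apply intervalIntegral.integral_congr
    intro t ht
    rw [Set.uIcc_of_le hs] at ht
    simp only [hgdef, hν'def, max_eq_left ht.1]
  have hfun : (fun x : E => η (R⁻¹ * ρ ‖x‖)) = fun x : E => η (R⁻¹ * F ‖x‖) :=
    funext fun x => by rw [hρF _ (norm_nonneg x)]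
  rw [hfun]
  -- Lipschitz constants
  have hηlip : LipschitzWith 2 η := by
    apply lipschitzWith_of_nnnorm_deriv_le (hη.differentiable (by simp))
    intro x
    rw [← NNReal.coe_le_coe, coe_nnnorm, Real.norm_eq_abs]
    exact_mod_cast hη' x
  have hFlip : LipschitzWith 1 F := by
    apply LipschitzWith.of_dist_le_mul
    intro a b
    rw [Real.dist_eq, Real.dist_eq, NNReal.coe_one, one_mul]
    have h1 : F a - F b = ∫ t in b..a, g t :=
      intervalIntegral.integral_interval_sub_left (hint 0 a) (hint 0 b)
    rw [h1]
    have := intervalIntegral.norm_integral_le_of_norm_le_const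
      (C := 1) (f := g) (a := b) (b := a) (by
        intro t ht
        rw [Real.norm_eq_abs, abs_of_pos (hgpos t)]
        exact hgle1 t)
    simpa [Real.norm_eq_abs, abs_sub_comm] using this
  constructor
  · refine ⟨2 * (‖R⁻¹‖₊ * (1 * 1)), ?_⟩
    have hmullip : LipschitzWith ‖R⁻¹‖₊ (fun s : ℝ => R⁻¹ * s) := by
      simpa [smul_eq_mul] using lipschitzWith_smul (β := ℝ) R⁻¹
    exact hηlip.comp (hmullip.comp (hFlip.comp lipschitzWith_one_norm))
  -- a.e. part
  set D : Set ℝ := {s | ¬ContinuousAt ν' s} ∪ {0} with hDdef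
  have hD : D.Countable :=
    (hν'mono.countable_not_continuousAt).union (Set.countable_singleton 0)
  have hnull : volume (⋃ s ∈ D, Metric.sphere (0 : E) s) = 0 := by
    rw [measure_biUnion_null_iff hD]
    intro s _
    exact Measure.addHaar_sphere volume 0 s
  filter_upwards [measure_eq_zero_iff_ae_notMem.mp hnull] with x hx
  have hDnot : ‖x‖ ∉ D := fun h =>
    hx (Set.mem_biUnion h (mem_sphere_zero_iff_norm.2 rfl))
  have h0 : ‖x‖ ≠ 0 := fun h => hDnot (Or.inr h)
  have hx0 : x ≠ 0 := fun h => h0 (by simp [h])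
  have hcν : ContinuousAt ν' ‖x‖ := not_not.1 fun h => hDnot (Or.inl h)
  have hcg : ContinuousAt g ‖x‖ := by
    exact ContinuousAt.rpow_const (continuousAt_const.add hcν)
      (Or.inl (ne_of_gt (h1νpos _)))
  -- derivative of F at ‖x‖
  have hFd : HasDerivAt F (g ‖x‖) ‖x‖ :=
    intervalIntegral.integral_hasDerivAt_right (hint 0 ‖x‖)
      (hganti.measurable.aestronglyMeasurable.stronglyMeasurableAtFilter) hcg
  -- derivative of the norm
  have hnormd : DifferentiableAt ℝ (fun y : E => ‖y‖) x :=
    ((contDiffAt_norm ℝ (n := 1) hx0).differentiableAt one_ne_zero)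
  set N := fderiv ℝ (fun y : E => ‖y‖) x with hNdef
  have hN : HasFDerivAt (fun y : E => ‖y‖) N x := hnormd.hasFDerivAt
  have hNle : ‖N‖ ≤ 1 := by
    have := hN.le_of_lipschitz lipschitzWith_one_norm
    simpa using this
  have hu : HasFDerivAt (fun y : E => F ‖y‖) (g ‖x‖ • N) x :=
    hFd.comp_hasFDerivAt x hN
  have hmulu : HasFDerivAt (fun y : E => R⁻¹ * F ‖y‖) (R⁻¹ • g ‖x‖ • N) x :=
    hu.const_mul R⁻¹
  have hηd : HasDerivAt η (deriv η (R⁻¹ * F ‖x‖)) (R⁻¹ * F ‖x‖) :=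
    ((hη.differentiable (by simp)) _).hasDerivAt
  have hfinal : HasFDerivAt (fun y : E => η (R⁻¹ * F ‖y‖))
      (deriv η (R⁻¹ * F ‖x‖) • (R⁻¹ • g ‖x‖ • N)) x :=
    hηd.comp_hasFDerivAt x hmulu
  refine ⟨hfinal.differentiableAt, ?_⟩
  have hν'x : ν' ‖x‖ = ν ‖x‖ := by
    simp [hν'def, max_eq_left (norm_nonneg x)]
  have hgradnorm : ‖gradient (fun y : E => η (R⁻¹ * F ‖y‖)) x‖
      = ‖fderiv ℝ (fun y : E => η (R⁻¹ * F ‖y‖)) x‖ := by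
    rw [gradient]
    exact LinearIsometryEquiv.norm_map _ _
  have hfd : fderiv ℝ (fun y : E => η (R⁻¹ * F ‖y‖)) x
      = deriv η (R⁻¹ * F ‖x‖) • (R⁻¹ • g ‖x‖ • N) := hfinal.fderiv
  have hgrad_le : ‖gradient (fun y : E => η (R⁻¹ * F ‖y‖)) x‖ ≤ 2 * R⁻¹ * g ‖x‖ := by
    rw [hgradnorm, hfd]
    rw [norm_smul, norm_smul, norm_smul]
    simp only [Real.norm_eq_abs]
    have h1 : |deriv η (R⁻¹ * F ‖x‖)| ≤ 2 := hη' _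
    have h2 : |R⁻¹| = R⁻¹ := abs_of_pos (inv_pos.2 hR)
    have h3 : |g ‖x‖| = g ‖x‖ := abs_of_pos (hgpos _)
    rw [h2, h3]
    calc |deriv η (R⁻¹ * F ‖x‖)| * (R⁻¹ * (g ‖x‖ * ‖N‖))
        ≤ 2 * (R⁻¹ * (g ‖x‖ * 1)) := by
          have hnn : (0:ℝ) ≤ R⁻¹ * (g ‖x‖ * ‖N‖) :=
            mul_nonneg (inv_pos.2 hR).le (mul_nonneg (hgpos _).le (norm_nonneg _))
          apply mul_le_mul h1 _ hnn (by norm_num)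
          apply mul_le_mul_of_nonneg_left _ (le_of_lt (inv_pos.2 hR))
          exact mul_le_mul_of_nonneg_left hNle (le_of_lt (hgpos _))
      _ = 2 * R⁻¹ * g ‖x‖ := by ring
  have ha : (0 : ℝ) < 1 + ν ‖x‖ := by rw [← hν'x]; exact h1νpos _
  have hgs2 : (1 + ν ‖x‖) * g ‖x‖ ^ 2 = 1 := by
    simp only [hgdef, hν'x]
    rw [← Real.rpow_natCast ((1 + ν ‖x‖) ^ (-(1 : ℝ) / 2)) 2,
      ← Real.rpow_mul ha.le]
    norm_num
    rw [Real.rpow_neg_one]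
    exact mul_inv_cancel₀ (ne_of_gt ha)
  calc (1 + ν ‖x‖) * ‖gradient (fun y : E => η (R⁻¹ * F ‖y‖)) x‖ ^ 2
      ≤ (1 + ν ‖x‖) * (2 * R⁻¹ * g ‖x‖) ^ 2 := by
        apply mul_le_mul_of_nonneg_left _ ha.le
        exact pow_le_pow_left₀ (norm_nonneg _) hgrad_le 2
    _ = 4 * (R ^ 2)⁻¹ * ((1 + ν ‖x‖) * g ‖x‖ ^ 2) := by ring
    _ = 4 * (R ^ 2)⁻¹ := by rw [hgs2, mul_one]
end
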